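/- Let H be a Hopf algebra and r a coalgebra endomorphism of H ⊗ H that is a braiding operator, i.e., satisfying mr = m, r(m ⊗ id) = (id ⊗ m)(r ⊗ id)(id ⊗ r), r(id ⊗ m) = (m ⊗ id)(id ⊗ r)(r ⊗ id), r(u ⊗ id) = id ⊗ u, and r(id ⊗ u) = u ⊗ id. Define x ⇀ y = (id ⊗ ε)r(x ⊗ y) and x ↼ y = (ε ⊗ id)r(x ⊗ y). Then (H, ⇀, ↼) is a matched pair of actions on H and r(x ⊗ y) = (x₁ ⇀ y₁) ⊗ (x₂ ↼ y₂). -/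

import Mathlib

open TensorProduct Coalgebra HopfAlgebra LinearMap

set_option synthInstance.maxHeartbeats 1000000
set_option maxHeartbeats 2000000

noncomputable section

variable (k H : Type*) [CommRing k] [Ring H] [HopfAlgebra k H]

universe w₁ w₂ w₃ w₄ w₅ w₆ w₇ w₈ w₉ w₁₀ w₁₁ w₁₂

/-- `f` is a left `H`-module coalgebra action of the Hopf algebra `H` on itself. -/
structure IsLeftModCoalgAction (f : H ⊗[k] H →ₗ[k] H) : Prop where
  one_act : ∀ a : H, f (1 ⊗ₜ a) = a
  mul_act : ∀ x y a : H, f ((x * y) ⊗ₜ a) = f (x ⊗ₜ f (y ⊗ₜ a))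
  counit_act : ∀ x a : H, counit (R := k) (f (x ⊗ₜ a)) = counit (R := k) x * counit (R := k) a
  comul_act : ∀ (x a : H) {ι : Type w₁} {κ : Type w₂} (rx : Coalgebra.Repr k x ι) (ra : Coalgebra.Repr k a κ),
      comul (R := k) (f (x ⊗ₜ a)) =
        ∑ i ∈ rx.index, ∑ j ∈ ra.index,
          f (rx.left i ⊗ₜ ra.left j) ⊗ₜ[k] f (rx.right i ⊗ₜ ra.right j)

/-- `g` is a right `H`-module coalgebra action of the Hopf algebra `H` on itself. -/
structure IsRightModCoalgAction (g : H ⊗[k] H →ₗ[k] H) : Prop where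
  act_one : ∀ x : H, g (x ⊗ₜ 1) = x
  act_mul : ∀ x a b : H, g (x ⊗ₜ (a * b)) = g (g (x ⊗ₜ a) ⊗ₜ b)
  counit_act : ∀ x a : H, counit (R := k) (g (x ⊗ₜ a)) = counit (R := k) x * counit (R := k) a
  comul_act : ∀ (x a : H) {ι : Type w₁} {κ : Type w₂} (rx : Coalgebra.Repr k x ι) (ra : Coalgebra.Repr k a κ),
      comul (R := k) (g (x ⊗ₜ a)) =
        ∑ i ∈ rx.index, ∑ j ∈ ra.index,
          g (rx.left i ⊗ₜ ra.left j) ⊗ₜ[k] g (rx.right i ⊗ₜ ra.right j)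

/-- `(H, f, g)` (written `(H, ⇀, ↼)`) is a matched pair of actions on the Hopf algebra `H`:
`f` is a left module coalgebra action, `g` a right module coalgebra action, satisfying the
matched pair conditions (MP1)–(MP5) and the extra condition `xy = (x₁ ⇀ y₁)(x₂ ↼ y₂)`. -/
structure IsMatchedPairOfActions (f g : H ⊗[k] H →ₗ[k] H) : Prop where
  left_action : IsLeftModCoalgAction.{w₁, w₂, _, _} k H f
  right_action : IsRightModCoalgAction.{w₃, w₄, _, _} k H g
  mp1 : ∀ (x a b : H) {ι : Type w₅} {κ : Type w₆} (rx : Coalgebra.Repr k x ι) (ra : Coalgebra.Repr k a κ),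
      f (x ⊗ₜ (a * b)) =
        ∑ i ∈ rx.index, ∑ j ∈ ra.index,
          f (rx.left i ⊗ₜ ra.left j) * f (g (rx.right i ⊗ₜ ra.right j) ⊗ₜ b)
  mp2 : ∀ x : H, f (x ⊗ₜ 1) = counit (R := k) x • (1 : H)
  mp3 : ∀ (x y a : H) {ι : Type w₇} {κ : Type w₈} (ry : Coalgebra.Repr k y ι) (ra : Coalgebra.Repr k a κ),
      g ((x * y) ⊗ₜ a) =
        ∑ i ∈ ry.index, ∑ j ∈ ra.index,
          g (x ⊗ₜ f (ry.left i ⊗ₜ ra.left j)) * g (ry.right i ⊗ₜ ra.right j)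
  mp4 : ∀ a : H, g ((1 : H) ⊗ₜ a) = counit (R := k) a • (1 : H)
  mp5 : ∀ (x a : H) {ι : Type w₉} {κ : Type w₁₀} (rx : Coalgebra.Repr k x ι) (ra : Coalgebra.Repr k a κ),
      (∑ i ∈ rx.index, ∑ j ∈ ra.index,
        f (rx.left i ⊗ₜ ra.left j) ⊗ₜ[k] g (rx.right i ⊗ₜ ra.right j)) =
      ∑ i ∈ rx.index, ∑ j ∈ ra.index,
        f (rx.right i ⊗ₜ ra.right j) ⊗ₜ[k] g (rx.left i ⊗ₜ ra.left j)
  mp_mul : ∀ (x y : H) {ι : Type w₁₁} {κ : Type w₁₂} (rx : Coalgebra.Repr k x ι) (ry : Coalgebra.Repr k y κ),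
      x * y = ∑ i ∈ rx.index, ∑ j ∈ ry.index,
        f (rx.left i ⊗ₜ ry.left j) * g (rx.right i ⊗ₜ ry.right j)

/-- The braiding operator `r(x ⊗ y) = (x₁ ⇀ y₁) ⊗ (x₂ ↼ y₂)` associated to the pair `(f, g)`. -/
def braidOp (f g : H ⊗[k] H →ₗ[k] H) : H ⊗[k] H →ₗ[k] H ⊗[k] H :=
  TensorProduct.map f g ∘ₗ (tensorTensorTensorComm k H H H H).toLinearMap
    ∘ₗ TensorProduct.map (comul (R := k)) (comul (R := k))



/-- left projection -/
def fL : H ⊗[k] H →ₗ[k] H := (TensorProduct.rid k H).toLinearMap ∘ₗ lTensor H (counit (R := k))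
/-- right projection -/
def gL : H ⊗[k] H →ₗ[k] H := (TensorProduct.lid k H).toLinearMap ∘ₗ rTensor H (counit (R := k))

variable {k H}

@[simp] lemma fL_tmul (a b : H) : fL k H (a ⊗ₜ b) = counit (R := k) b • a := by
  simp [fL]

@[simp] lemma gL_tmul (a b : H) : gL k H (a ⊗ₜ b) = counit (R := k) a • b := by
  simp [gL]

lemma repr_smul_right {a : H} {ι : Type*} (ra : Coalgebra.Repr k a ι) :
    ∑ i ∈ ra.index, counit (R := k) (ra.left i) • ra.right i = a := by
  have h := congrArg (TensorProduct.lid k H) (Coalgebra.sum_counit_tmul_eq (R := k) ra)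
  rw [map_sum] at h
  simpa using h

lemma repr_smul_left {a : H} {ι : Type*} (ra : Coalgebra.Repr k a ι) :
    ∑ i ∈ ra.index, counit (R := k) (ra.right i) • ra.left i = a := by
  have h := congrArg (TensorProduct.rid k H) (Coalgebra.sum_tmul_counit_eq (R := k) ra)
  rw [map_sum] at h
  simpa using h

lemma comulHH (x a : H) {ι κ : Type*} (rx : Coalgebra.Repr k x ι) (ra : Coalgebra.Repr k a κ) :
    comul (R := k) (x ⊗ₜ a) = ∑ i ∈ rx.index, ∑ j ∈ ra.index,
      (rx.left i ⊗ₜ[k] ra.left j) ⊗ₜ[k] (rx.right i ⊗ₜ[k] ra.right j) := by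
  rw [TensorProduct.comul_tmul]
  simp only [LinearMap.comp_apply, TensorProduct.map_tmul, ← rx.eq, ← ra.eq,
    TensorProduct.sum_tmul, TensorProduct.tmul_sum, map_sum,
    TensorProduct.AlgebraTensorModule.tensorTensorTensorComm_tmul]
  rw [Finset.sum_comm]


lemma repr_counit_mul {a : H} {ι : Type*} (ra : Coalgebra.Repr k a ι) :
    ∑ i ∈ ra.index, counit (R := k) (ra.left i) * counit (R := k) (ra.right i)
      = counit (R := k) a := by
  have h := congrArg (counit (R := k)) (repr_smul_right ra)
  rw [map_sum] at h
  simpa [smul_eq_mul, mul_comm] using h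

lemma map_fg_comul (w : H ⊗[k] H) :
    TensorProduct.map (fL k H) (gL k H) (comul (R := k) w) = w := by
  induction w using TensorProduct.induction_on with
  | zero => simp
  | add x y hx hy => rw [map_add, map_add, hx, hy]
  | tmul a b =>
    rw [comulHH a b (ℛ k a) (ℛ k b)]
    simp only [map_sum, TensorProduct.map_tmul, fL_tmul, gL_tmul]
    have hin : ∀ i, ∑ j ∈ (ℛ k b).index,
        (counit (R := k) ((ℛ k b).left j) • (ℛ k a).left i) ⊗ₜ[k]
          (counit (R := k) ((ℛ k a).right i) • (ℛ k b).right j)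
        = (counit (R := k) ((ℛ k a).right i) • (ℛ k a).left i) ⊗ₜ[k] b := by
      intro i
      have step : ∀ j ∈ (ℛ k b).index,
          (counit (R := k) ((ℛ k b).left j) • (ℛ k a).left i) ⊗ₜ[k]
            (counit (R := k) ((ℛ k a).right i) • (ℛ k b).right j)
          = (ℛ k a).left i ⊗ₜ[k]
            (counit (R := k) ((ℛ k a).right i) •
              (counit (R := k) ((ℛ k b).left j) • (ℛ k b).right j)) := by
        intro j _
        rw [TensorProduct.smul_tmul, smul_comm]
      rw [Finset.sum_congr rfl step, ← TensorProduct.tmul_sum, ← Finset.smul_sum,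
        repr_smul_right, TensorProduct.tmul_smul, TensorProduct.smul_tmul']
    rw [Finset.sum_congr rfl fun i _ => hin i, ← TensorProduct.sum_tmul, repr_smul_left]

lemma map_ff_comul (w : H ⊗[k] H) :
    TensorProduct.map (fL k H) (fL k H) (comul (R := k) w) = comul (R := k) (fL k H w) := by
  induction w using TensorProduct.induction_on with
  | zero => simp
  | add x y hx hy => simp only [map_add, hx, hy]
  | tmul a b =>
    rw [comulHH a b (ℛ k a) (ℛ k b), fL_tmul, map_smul, ← (ℛ k a).eq, Finset.smul_sum]
    simp only [map_sum, TensorProduct.map_tmul, fL_tmul]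
    refine Finset.sum_congr rfl fun i _ => ?_
    have step : ∀ j ∈ (ℛ k b).index,
        (counit (R := k) ((ℛ k b).left j) • (ℛ k a).left i) ⊗ₜ[k]
          (counit (R := k) ((ℛ k b).right j) • (ℛ k a).right i)
        = (counit (R := k) ((ℛ k b).left j) * counit (R := k) ((ℛ k b).right j)) •
            ((ℛ k a).left i ⊗ₜ[k] (ℛ k a).right i) := by
      intro j _
      rw [TensorProduct.tmul_smul, TensorProduct.smul_tmul', smul_smul,
        mul_comm (counit (R := k) ((ℛ k b).right j)), ← TensorProduct.smul_tmul']
    rw [Finset.sum_congr rfl step, ← Finset.sum_smul, repr_counit_mul]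

lemma map_gg_comul (w : H ⊗[k] H) :
    TensorProduct.map (gL k H) (gL k H) (comul (R := k) w) = comul (R := k) (gL k H w) := by
  induction w using TensorProduct.induction_on with
  | zero => simp
  | add x y hx hy => simp only [map_add, hx, hy]
  | tmul a b =>
    rw [comulHH a b (ℛ k a) (ℛ k b), gL_tmul, map_smul, ← (ℛ k b).eq, Finset.smul_sum]
    simp only [map_sum, TensorProduct.map_tmul, gL_tmul]
    rw [Finset.sum_comm]
    refine Finset.sum_congr rfl fun j _ => ?_
    have step : ∀ i ∈ (ℛ k a).index,
        (counit (R := k) ((ℛ k a).left i) • (ℛ k b).left j) ⊗ₜ[k]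
          (counit (R := k) ((ℛ k a).right i) • (ℛ k b).right j)
        = (counit (R := k) ((ℛ k a).left i) * counit (R := k) ((ℛ k a).right i)) •
            ((ℛ k b).left j ⊗ₜ[k] (ℛ k b).right j) := by
      intro i _
      rw [TensorProduct.tmul_smul, TensorProduct.smul_tmul', smul_smul,
        mul_comm (counit (R := k) ((ℛ k a).right i)), ← TensorProduct.smul_tmul']
    rw [Finset.sum_congr rfl step, ← Finset.sum_smul, repr_counit_mul]

lemma map_gf_comul (w : H ⊗[k] H) :
    TensorProduct.map (gL k H) (fL k H) (comul (R := k) w) = TensorProduct.comm k H H w := by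
  induction w using TensorProduct.induction_on with
  | zero => simp
  | add x y hx hy => simp only [map_add, hx, hy]
  | tmul a b =>
    rw [comulHH a b (ℛ k a) (ℛ k b)]
    simp only [map_sum, TensorProduct.map_tmul, fL_tmul, gL_tmul, TensorProduct.comm_tmul]
    rw [Finset.sum_comm]
    have hin : ∀ j, ∑ i ∈ (ℛ k a).index,
        (counit (R := k) ((ℛ k a).left i) • (ℛ k b).left j) ⊗ₜ[k]
          (counit (R := k) ((ℛ k b).right j) • (ℛ k a).right i)
        = (counit (R := k) ((ℛ k b).right j) • (ℛ k b).left j) ⊗ₜ[k] a := by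
      intro j
      have step : ∀ i ∈ (ℛ k a).index,
          (counit (R := k) ((ℛ k a).left i) • (ℛ k b).left j) ⊗ₜ[k]
            (counit (R := k) ((ℛ k b).right j) • (ℛ k a).right i)
          = (ℛ k b).left j ⊗ₜ[k]
            (counit (R := k) ((ℛ k b).right j) •
              (counit (R := k) ((ℛ k a).left i) • (ℛ k a).right i)) := by
        intro i _
        rw [TensorProduct.smul_tmul, smul_comm]
      rw [Finset.sum_congr rfl step, ← TensorProduct.tmul_sum, ← Finset.smul_sum,
        repr_smul_right, TensorProduct.tmul_smul, TensorProduct.smul_tmul']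
    rw [Finset.sum_congr rfl fun j _ => hin j, ← TensorProduct.sum_tmul, repr_smul_left]

lemma counit_fL (w : H ⊗[k] H) :
    counit (R := k) (fL k H w) = counit (R := k) (A := H ⊗[k] H) w := by
  induction w using TensorProduct.induction_on with
  | zero => simp
  | add x y hx hy => simp only [map_add, hx, hy]
  | tmul a b =>
    rw [fL_tmul, map_smul, TensorProduct.counit_tmul]

lemma counit_gL (w : H ⊗[k] H) :
    counit (R := k) (gL k H w) = counit (R := k) (A := H ⊗[k] H) w := by
  induction w using TensorProduct.induction_on with
  | zero => simp
  | add x y hx hy => simp only [map_add, hx, hy]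
  | tmul a b =>
    rw [gL_tmul, map_smul, TensorProduct.counit_tmul]
    simp [smul_eq_mul, mul_comm]

lemma aux_f_right (v : H) (t : H ⊗[k] H) :
    fL k H (lTensor H (mul' k H) ((TensorProduct.assoc k H H H) (t ⊗ₜ v)))
      = counit (R := k) v • fL k H t := by
  induction t using TensorProduct.induction_on with
  | zero => simp
  | add x y hx hy => simp only [TensorProduct.add_tmul, map_add, hx, hy, smul_add]
  | tmul p q =>
    rw [TensorProduct.assoc_tmul, lTensor_tmul, mul'_apply, fL_tmul, fL_tmul]
    rw [Bialgebra.counit_mul, smul_smul, mul_comm]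

lemma aux_g_right (v : H) (t : H ⊗[k] H) :
    gL k H (lTensor H (mul' k H) ((TensorProduct.assoc k H H H) (t ⊗ₜ v)))
      = gL k H t * v := by
  induction t using TensorProduct.induction_on with
  | zero => simp
  | add x y hx hy => simp only [TensorProduct.add_tmul, map_add, hx, hy, add_mul]
  | tmul p q =>
    rw [TensorProduct.assoc_tmul, lTensor_tmul, mul'_apply, gL_tmul, gL_tmul, smul_mul_assoc]

lemma aux_f_left (u : H) (t : H ⊗[k] H) :
    fL k H (rTensor H (mul' k H) ((TensorProduct.assoc k H H H).symm (u ⊗ₜ t)))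
      = u * fL k H t := by
  induction t using TensorProduct.induction_on with
  | zero => simp
  | add x y hx hy => simp only [TensorProduct.tmul_add, map_add, hx, hy, mul_add]
  | tmul p q =>
    rw [TensorProduct.assoc_symm_tmul, rTensor_tmul, mul'_apply, fL_tmul, fL_tmul,
      mul_smul_comm]

lemma aux_g_left (u : H) (t : H ⊗[k] H) :
    gL k H (rTensor H (mul' k H) ((TensorProduct.assoc k H H H).symm (u ⊗ₜ t)))
      = counit (R := k) u • gL k H t := by
  induction t using TensorProduct.induction_on with
  | zero => simp
  | add x y hx hy => simp only [TensorProduct.tmul_add, map_add, hx, hy, smul_add]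
  | tmul p q =>
    rw [TensorProduct.assoc_symm_tmul, rTensor_tmul, mul'_apply, gL_tmul, gL_tmul,
      Bialgebra.counit_mul, smul_smul]

lemma hcm_lem (r : H ⊗[k] H →ₗ[k] H ⊗[k] H)
    (hcomul : comul (R := k) (A := H ⊗[k] H) ∘ₗ r =
      TensorProduct.map r r ∘ₗ comul (R := k) (A := H ⊗[k] H))
    (x y : H) {ι κ : Type*} (rx : Coalgebra.Repr k x ι) (ry : Coalgebra.Repr k y κ) :
    comul (R := k) (r (x ⊗ₜ y)) = ∑ i ∈ rx.index, ∑ j ∈ ry.index,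
      r (rx.left i ⊗ₜ ry.left j) ⊗ₜ[k] r (rx.right i ⊗ₜ ry.right j) := by
  have h := LinearMap.congr_fun hcomul (x ⊗ₜ y)
  simp only [LinearMap.comp_apply] at h
  rw [comulHH x y rx ry] at h
  simpa only [map_sum, TensorProduct.map_tmul] using h

lemma hkey_lem (r : H ⊗[k] H →ₗ[k] H ⊗[k] H)
    (hcomul : comul (R := k) (A := H ⊗[k] H) ∘ₗ r =
      TensorProduct.map r r ∘ₗ comul (R := k) (A := H ⊗[k] H))
    (x y : H) {ι κ : Type*} (rx : Coalgebra.Repr k x ι) (ry : Coalgebra.Repr k y κ) :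
    r (x ⊗ₜ y) = ∑ i ∈ rx.index, ∑ j ∈ ry.index,
      fL k H (r (rx.left i ⊗ₜ ry.left j)) ⊗ₜ[k] gL k H (r (rx.right i ⊗ₜ ry.right j)) := by
  have h2 := congrArg (TensorProduct.map (fL k H) (gL k H)) (hcm_lem r hcomul x y rx ry)
  rw [map_fg_comul] at h2
  simpa only [map_sum, TensorProduct.map_tmul] using h2

variable (k H)



/-- A braiding operator `r` on a Hopf algebra `H` (a coalgebra endomorphism of
`H ⊗ H` satisfying (a)–(e)) gives rise to a matched pair of actions `⇀ = (id ⊗ ε)r`,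
`↼ = (ε ⊗ id)r`, and `r(x ⊗ y) = (x₁ ⇀ y₁) ⊗ (x₂ ↼ y₂)`. -/
theorem stmt6 (r : H ⊗[k] H →ₗ[k] H ⊗[k] H)
    (hcomul : comul (R := k) (A := H ⊗[k] H) ∘ₗ r =
      TensorProduct.map r r ∘ₗ comul (R := k) (A := H ⊗[k] H))
    (hcounit : counit (R := k) (A := H ⊗[k] H) ∘ₗ r = counit (R := k) (A := H ⊗[k] H))
    (ha : LinearMap.mul' k H ∘ₗ r = LinearMap.mul' k H)
    (hb : r ∘ₗ rTensor H (LinearMap.mul' k H) =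
      lTensor H (LinearMap.mul' k H) ∘ₗ (TensorProduct.assoc k H H H).toLinearMap ∘ₗ
        rTensor H r ∘ₗ (TensorProduct.assoc k H H H).symm.toLinearMap ∘ₗ
        lTensor H r ∘ₗ (TensorProduct.assoc k H H H).toLinearMap)
    (hc : r ∘ₗ lTensor H (LinearMap.mul' k H) =
      rTensor H (LinearMap.mul' k H) ∘ₗ (TensorProduct.assoc k H H H).symm.toLinearMap ∘ₗ
        lTensor H r ∘ₗ (TensorProduct.assoc k H H H).toLinearMap ∘ₗ
        rTensor H r ∘ₗ (TensorProduct.assoc k H H H).symm.toLinearMap)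
    (hd : ∀ y : H, r (1 ⊗ₜ y) = y ⊗ₜ 1)
    (he : ∀ x : H, r (x ⊗ₜ 1) = 1 ⊗ₜ x) :
    IsMatchedPairOfActions.{w₁, w₂, w₃, w₄, w₅, w₆, w₇, w₈, w₉, w₁₀, w₁₁, w₁₂, _, _} k H
      ((TensorProduct.rid k H).toLinearMap ∘ₗ lTensor H (counit (R := k)) ∘ₗ r)
      ((TensorProduct.lid k H).toLinearMap ∘ₗ rTensor H (counit (R := k)) ∘ₗ r) ∧
    r = braidOp k H
      ((TensorProduct.rid k H).toLinearMap ∘ₗ lTensor H (counit (R := k)) ∘ₗ r)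
      ((TensorProduct.lid k H).toLinearMap ∘ₗ rTensor H (counit (R := k)) ∘ₗ r) := by
  classical
  have happf : ∀ z, ((TensorProduct.rid k H).toLinearMap ∘ₗ lTensor H (counit (R := k)) ∘ₗ r) z
      = fL k H (r z) := fun z => rfl
  have happg : ∀ z, ((TensorProduct.lid k H).toLinearMap ∘ₗ rTensor H (counit (R := k)) ∘ₗ r) z
      = gL k H (r z) := fun z => rfl
  constructor
  · constructor
    · -- left action
      constructor
      · -- one_act
        intro a
        rw [happf, hd a, fL_tmul]
        simp [Bialgebra.counit_one]
      · -- mul_act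
        intro x y a
        simp only [happf]
        have hb' := LinearMap.congr_fun hb ((x ⊗ₜ y) ⊗ₜ a)
        simp only [LinearMap.comp_apply, LinearEquiv.coe_coe, rTensor_tmul, lTensor_tmul,
          mul'_apply, TensorProduct.assoc_tmul] at hb'
        obtain ⟨S, hS⟩ := TensorProduct.exists_finset (R := k) (r (y ⊗ₜ a))
        rw [hS, TensorProduct.tmul_sum] at hb'
        simp only [map_sum, TensorProduct.assoc_symm_tmul, rTensor_tmul] at hb'
        rw [hb', map_sum, hS, map_sum]
        simp only [fL_tmul]
        rw [TensorProduct.tmul_sum, map_sum, map_sum]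
        refine Finset.sum_congr rfl fun p _ => ?_
        rw [aux_f_right, TensorProduct.tmul_smul, map_smul, map_smul]
      · -- counit_act f
        intro x a
        rw [happf, counit_fL]
        have h := LinearMap.congr_fun hcounit (x ⊗ₜ a)
        simp only [LinearMap.comp_apply] at h
        rw [h, TensorProduct.counit_tmul]
        simp [mul'_apply, mul_comm]
      · -- comul_act f
        intro x a _ _ rx ra
        simp only [happf]
        have h2 := congrArg (TensorProduct.map (fL k H) (fL k H)) (hcm_lem r hcomul x a rx ra)
        rw [map_ff_comul] at h2
        simpa only [map_sum, TensorProduct.map_tmul] using h2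
    · -- right action
      constructor
      · -- act_one
        intro x
        rw [happg, he x, gL_tmul]
        simp [Bialgebra.counit_one]
      · -- act_mul
        intro x a b
        simp only [happg]
        have hc' := LinearMap.congr_fun hc (x ⊗ₜ (a ⊗ₜ b))
        simp only [LinearMap.comp_apply, LinearEquiv.coe_coe, lTensor_tmul, mul'_apply,
          TensorProduct.assoc_symm_tmul, rTensor_tmul] at hc'
        obtain ⟨S, hS⟩ := TensorProduct.exists_finset (R := k) (r (x ⊗ₜ a))
        rw [hS] at hc'
        simp only [TensorProduct.sum_tmul, map_sum, TensorProduct.assoc_tmul,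
          lTensor_tmul] at hc'
        have h2 := congrArg (gL k H) hc'
        simp only [map_sum, aux_g_left] at h2
        rw [h2, hS, map_sum]
        simp only [gL_tmul]
        rw [TensorProduct.sum_tmul, map_sum, map_sum]
        refine Finset.sum_congr rfl fun p _ => ?_
        rw [← TensorProduct.smul_tmul', map_smul, map_smul]
      · -- counit_act g
        intro x a
        rw [happg, counit_gL]
        have h := LinearMap.congr_fun hcounit (x ⊗ₜ a)
        simp only [LinearMap.comp_apply] at h
        rw [h, TensorProduct.counit_tmul]
        simp [mul'_apply, mul_comm]
      · -- comul_act g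
        intro x a _ _ rx ra
        simp only [happg]
        have h2 := congrArg (TensorProduct.map (gL k H) (gL k H)) (hcm_lem r hcomul x a rx ra)
        rw [map_gg_comul] at h2
        simpa only [map_sum, TensorProduct.map_tmul] using h2
    · -- mp1
      intro x a b _ _ rx ra
      simp only [happf, happg]
      have hc' := LinearMap.congr_fun hc (x ⊗ₜ (a ⊗ₜ b))
      simp only [LinearMap.comp_apply, LinearEquiv.coe_coe, lTensor_tmul, mul'_apply,
        TensorProduct.assoc_symm_tmul, rTensor_tmul] at hc'
      rw [hkey_lem r hcomul x a rx ra] at hc'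
      simp only [TensorProduct.sum_tmul, map_sum, TensorProduct.assoc_tmul,
        lTensor_tmul] at hc'
      have h2 := congrArg (fL k H) hc'
      simpa only [map_sum, aux_f_left] using h2
    · -- mp2
      intro x
      rw [happf, he x, fL_tmul]
    · -- mp3
      intro x y a _ _ ry ra
      simp only [happf, happg]
      have hb' := LinearMap.congr_fun hb ((x ⊗ₜ y) ⊗ₜ a)
      simp only [LinearMap.comp_apply, LinearEquiv.coe_coe, rTensor_tmul, lTensor_tmul,
        mul'_apply, TensorProduct.assoc_tmul] at hb'
      rw [hkey_lem r hcomul y a ry ra] at hb'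
      rw [TensorProduct.tmul_sum] at hb'
      simp only [TensorProduct.tmul_sum, map_sum, TensorProduct.assoc_symm_tmul,
        rTensor_tmul] at hb'
      have h2 := congrArg (gL k H) hb'
      simpa only [map_sum, aux_g_right] using h2
    · -- mp4
      intro a
      rw [happg, hd a, gL_tmul]
    · -- mp5
      intro x a _ _ rx ra
      simp only [happf, happg]
      have h2 := congrArg (TensorProduct.map (gL k H) (fL k H)) (hcm_lem r hcomul x a rx ra)
      rw [map_gf_comul] at h2
      simp only [map_sum, TensorProduct.map_tmul] at h2
      have h3 := congrArg (TensorProduct.comm k H H).symm h2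
      simp only [map_sum, TensorProduct.comm_symm_tmul, LinearEquiv.symm_apply_apply] at h3
      exact (hkey_lem r hcomul x a rx ra).symm.trans h3
    · -- mp_mul
      intro x y _ _ rx ry
      simp only [happf, happg]
      have ha' := LinearMap.congr_fun ha (x ⊗ₜ y)
      simp only [LinearMap.comp_apply, mul'_apply] at ha'
      rw [← ha', hkey_lem r hcomul x y rx ry]
      simp only [map_sum, mul'_apply]
  · -- r = braidOp f g
    apply TensorProduct.ext'
    intro x y
    have hbo : braidOp k H
        ((TensorProduct.rid k H).toLinearMap ∘ₗ lTensor H (counit (R := k)) ∘ₗ r)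
        ((TensorProduct.lid k H).toLinearMap ∘ₗ rTensor H (counit (R := k)) ∘ₗ r) (x ⊗ₜ y)
        = TensorProduct.map
            ((TensorProduct.rid k H).toLinearMap ∘ₗ lTensor H (counit (R := k)) ∘ₗ r)
            ((TensorProduct.lid k H).toLinearMap ∘ₗ rTensor H (counit (R := k)) ∘ₗ r)
            (comul (R := k) (x ⊗ₜ y)) := rfl
    rw [hbo, comulHH x y (ℛ k x) (ℛ k y)]
    simp only [map_sum, TensorProduct.map_tmul, happf, happg]
    exact hkey_lem r hcomul x y (ℛ k x) (ℛ k y)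


end
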